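/- arXiv:1706.00187 — 2 statements merged into one kernel-verified Lean document; each statement's English description precedes it below -/
import Mathlib

section
/- For every n ≥ 1, the measure μ_n equals the n-fold convolution μ_n = ⋆_{m=1}^{n} (1/3)(δ_0 + δ_{2^{-m}} + δ_{-2^{-m}}) of probability measures on the 1-torus 𝕋 = ℝ/ℤ, and μ_0 = δ_0. -/
open MeasureTheory Filter Topology Real
open scoped ENNReal

noncomputable section

/-- Stern's diatomic sequence: s(0)=0, s(1)=1, s(2n)=s(n), s(2n+1)=s(n)+s(n+1). -/
def stern : ℕ → ℕ
  | 0 => 0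
  | 1 => 1
  | n + 2 =>
    if h : n % 2 = 0 then stern (n / 2 + 1)
    else stern (n / 2 + 1) + stern (n / 2 + 2)
decreasing_by all_goals omega
/-- The probability measure μ_n = 3^{-n} ∑_{m=0}^{2^n-1} s(2^n+m) δ_{m/2^n} on the 1-torus. -/
def sternMeasure (n : ℕ) : Measure UnitAddCircle :=
  ((3 : ℝ≥0∞) ^ n)⁻¹ • ∑ m ∈ Finset.range (2 ^ n),
    (stern (2 ^ n + m) : ℝ≥0∞) • Measure.dirac ((m / 2 ^ n : ℝ) : UnitAddCircle)
/-- The building block ν_m = (1/3)(δ_0 + δ_{2^{-m}} + δ_{-2^{-m}}) on the 1-torus. -/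
def sternNu (m : ℕ) : Measure UnitAddCircle :=
  (3 : ℝ≥0∞)⁻¹ • (Measure.dirac ((0 : ℝ) : UnitAddCircle)
    + Measure.dirac (((((2 : ℝ) ^ m)⁻¹ : ℝ)) : UnitAddCircle)
    + Measure.dirac (((-(((2 : ℝ) ^ m)⁻¹) : ℝ)) : UnitAddCircle))

/-- The iterated convolution ⋆_{m=1}^{n} ν_m (the empty convolution being δ_0). -/
def sternConvIter : ℕ → Measure UnitAddCircle
  | 0 => Measure.dirac ((0 : ℝ) : UnitAddCircle)
  | n + 1 => (sternConvIter n).conv (sternNu (n + 1))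

/- ### Auxiliary lemmas -/

lemma stern_two_mul (n : ℕ) : stern (2 * n) = stern n := by
  cases n with
  | zero => rfl
  | succ m =>
    show stern (2 * m + 2) = _
    rw [stern]
    have h1 : 2 * m % 2 = 0 := by omega
    have h2 : 2 * m / 2 = m := by omega
    simp [h1, h2]

lemma stern_two_mul_add_one (n : ℕ) : stern (2 * n + 1) = stern n + stern (n + 1) := by
  cases n with
  | zero => simp [stern]
  | succ m =>
    show stern (2 * m + 1 + 2) = _
    rw [stern]
    have h1 : ¬ (2 * m + 1) % 2 = 0 := by omega
    have h2 : (2 * m + 1) / 2 = m := by omega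
    simp [h1, h2]

lemma stern_pow (n : ℕ) : stern (2 ^ n) = 1 := by
  induction n with
  | zero => simp [stern]
  | succ m ih => rw [pow_succ, mul_comm, stern_two_mul]; exact ih

lemma sFinite_finset_sum {α : Type*} [MeasurableSpace α] {ι : Type*} (s : Finset ι)
    (μ : ι → Measure α) (h : ∀ i, SFinite (μ i)) : SFinite (∑ i ∈ s, μ i) := by
  classical
  induction s using Finset.induction with
  | empty => simpa using inferInstanceAs (SFinite (0 : Measure α))
  | @insert a t hx ih =>
    rw [Finset.sum_insert hx]
    haveI := h a
    exact inferInstance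

lemma smul_conv' (c : ℝ≥0∞) (μ ν : Measure UnitAddCircle) [SFinite μ] [SFinite ν] :
    (c • μ).conv ν = c • μ.conv ν := by
  unfold Measure.conv
  have h : (c • μ).prod ν = c • μ.prod ν := by
    ext s hs
    rw [Measure.prod_apply hs, Measure.smul_apply, Measure.prod_apply hs,
      lintegral_smul_measure]
  rw [h, Measure.map_smul]

lemma conv_smul' (c : ℝ≥0∞) (μ ν : Measure UnitAddCircle) [SFinite μ] [SFinite ν] :
    μ.conv (c • ν) = c • μ.conv ν := by
  unfold Measure.conv
  have h : μ.prod (c • ν) = c • μ.prod ν := by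
    ext s hs
    rw [Measure.prod_apply hs, Measure.smul_apply, Measure.prod_apply hs]
    simp only [Measure.smul_apply, smul_eq_mul]
    rw [← lintegral_const_mul _ (measurable_measure_prodMk_left hs)]
  rw [h, Measure.map_smul]

lemma dirac_conv_dirac (a b : UnitAddCircle) :
    (Measure.dirac a).conv (Measure.dirac b) = Measure.dirac (a + b) := by
  unfold Measure.conv
  rw [Measure.dirac_prod_dirac, Measure.map_dirac' (by fun_prop)]

lemma conv_sum_dirac {ι : Type*} (s : Finset ι) (c : ι → ℝ≥0∞) (x : ι → UnitAddCircle)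
    (a : UnitAddCircle) :
    (∑ i ∈ s, c i • Measure.dirac (x i)).conv (Measure.dirac a)
      = ∑ i ∈ s, c i • Measure.dirac (x i + a) := by
  classical
  induction s using Finset.induction with
  | empty => simp [Measure.zero_conv]
  | @insert j t hj ih =>
    rw [Finset.sum_insert hj, Finset.sum_insert hj]
    haveI := sFinite_finset_sum t (fun i => c i • Measure.dirac (x i)) (fun i => inferInstance)
    rw [Measure.add_conv, smul_conv', dirac_conv_dirac, ih]

lemma sum_range_two_mul {M : Type*} [AddCommMonoid M] (N : ℕ) (f : ℕ → M) :
    ∑ m ∈ Finset.range (2 * N), f m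
      = ∑ k ∈ Finset.range N, f (2 * k) + ∑ k ∈ Finset.range N, f (2 * k + 1) := by
  induction N with
  | zero => simp
  | succ m ih =>
    have h : 2 * (m + 1) = (2 * m) + 1 + 1 := by ring
    rw [h, Finset.sum_range_succ, Finset.sum_range_succ, Finset.sum_range_succ,
      Finset.sum_range_succ, ih]
    abel

lemma sum_range_rotate {A : Type*} [AddCommMonoid A] (N : ℕ) (hN : 1 ≤ N) (f g : ℕ → A)
    (h1 : ∀ k, k + 1 < N → f k = g (k + 1)) (h2 : f (N - 1) = g 0) :
    ∑ k ∈ Finset.range N, f k = ∑ k ∈ Finset.range N, g k := by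
  obtain ⟨M, rfl⟩ : ∃ M, N = M + 1 := ⟨N - 1, by omega⟩
  rw [Finset.sum_range_succ, Finset.sum_range_succ']
  simp only [Nat.add_sub_cancel] at h2
  rw [h2]
  congr 1
  exact Finset.sum_congr rfl fun k hk => h1 k (by
    have := Finset.mem_range.mp hk; omega)

/-- The key combinatorial identity for the induction step. -/
lemma sternMeasure_succ (n : ℕ) :
    sternMeasure (n + 1) = (sternMeasure n).conv (sternNu (n + 1)) := by
  rw [sternMeasure, sternMeasure, sternNu]
  haveI hS : SFinite (∑ m ∈ Finset.range (2 ^ n),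
      (stern (2 ^ n + m) : ℝ≥0∞) • Measure.dirac ((m / 2 ^ n : ℝ) : UnitAddCircle)) :=
    sFinite_finset_sum _ _ (fun i => inferInstance)
  rw [smul_conv', conv_smul', smul_smul,
    Measure.conv_add, Measure.conv_add, conv_sum_dirac, conv_sum_dirac, conv_sum_dirac]
  have hsc : ((3 : ℝ≥0∞) ^ n)⁻¹ * 3⁻¹ = ((3 : ℝ≥0∞) ^ (n + 1))⁻¹ := by
    rw [pow_succ, ENNReal.mul_inv (by simp) (by simp)]
  rw [hsc]
  congr 1
  -- now the purely combinatorial sum identity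
  have h2 : (2 : ℕ) ^ (n + 1) = 2 * 2 ^ n := by ring
  rw [h2, sum_range_two_mul]
  have hpow : (1 : ℕ) ≤ 2 ^ n := Nat.one_le_two_pow
  have hP : (0 : ℝ) < (2 : ℝ) ^ n := by positivity
  have hP1 : (0 : ℝ) < (2 : ℝ) ^ (n + 1) := by positivity
  -- even terms
  have heven : ∑ k ∈ Finset.range (2 ^ n),
        (stern (2 * 2 ^ n + 2 * k) : ℝ≥0∞) •
          Measure.dirac ((((2 * k : ℕ) : ℝ) / (2 : ℝ) ^ (n + 1) : ℝ) : UnitAddCircle)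
      = ∑ k ∈ Finset.range (2 ^ n), (stern (2 ^ n + k) : ℝ≥0∞) •
          Measure.dirac (((k / 2 ^ n : ℝ) : UnitAddCircle) + (((0 : ℝ)) : UnitAddCircle)) := by
    refine Finset.sum_congr rfl fun k hk => ?_
    have hs : 2 * 2 ^ n + 2 * k = 2 * (2 ^ n + k) := by ring
    have hpt : (((2 * k : ℕ) : ℝ) / (2 : ℝ) ^ (n + 1) : ℝ) = ((k / 2 ^ n : ℝ) + (0 : ℝ)) := by
      push_cast
      field_simp
      ring
    rw [hs, stern_two_mul, ← AddCircle.coe_add, hpt]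
  -- odd terms: split coefficient
  have hodd : ∑ k ∈ Finset.range (2 ^ n),
        (stern (2 * 2 ^ n + (2 * k + 1)) : ℝ≥0∞) •
          Measure.dirac ((((2 * k + 1 : ℕ) : ℝ) / (2 : ℝ) ^ (n + 1) : ℝ) : UnitAddCircle)
      = (∑ k ∈ Finset.range (2 ^ n), (stern (2 ^ n + k) : ℝ≥0∞) •
            Measure.dirac (((k / 2 ^ n : ℝ) : UnitAddCircle)
              + (((((2 : ℝ) ^ (n + 1))⁻¹ : ℝ)) : UnitAddCircle)))
        + ∑ k ∈ Finset.range (2 ^ n), (stern (2 ^ n + k) : ℝ≥0∞) •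
            Measure.dirac (((k / 2 ^ n : ℝ) : UnitAddCircle)
              + (((-(((2 : ℝ) ^ (n + 1))⁻¹) : ℝ)) : UnitAddCircle)) := by
    have hsplit : ∀ k, (stern (2 * 2 ^ n + (2 * k + 1)) : ℝ≥0∞)
        = (stern (2 ^ n + k) : ℝ≥0∞) + (stern (2 ^ n + k + 1) : ℝ≥0∞) := by
      intro k
      have hs : 2 * 2 ^ n + (2 * k + 1) = 2 * (2 ^ n + k) + 1 := by ring
      rw [hs, stern_two_mul_add_one]
      push_cast
      ring
    calc ∑ k ∈ Finset.range (2 ^ n),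
          (stern (2 * 2 ^ n + (2 * k + 1)) : ℝ≥0∞) •
            Measure.dirac ((((2 * k + 1 : ℕ) : ℝ) / (2 : ℝ) ^ (n + 1) : ℝ) : UnitAddCircle)
        = (∑ k ∈ Finset.range (2 ^ n), (stern (2 ^ n + k) : ℝ≥0∞) •
              Measure.dirac ((((2 * k + 1 : ℕ) : ℝ) / (2 : ℝ) ^ (n + 1) : ℝ) : UnitAddCircle))
          + ∑ k ∈ Finset.range (2 ^ n), (stern (2 ^ n + k + 1) : ℝ≥0∞) •
              Measure.dirac ((((2 * k + 1 : ℕ) : ℝ) / (2 : ℝ) ^ (n + 1) : ℝ) : UnitAddCircle) := by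
          rw [← Finset.sum_add_distrib]
          refine Finset.sum_congr rfl fun k hk => ?_
          rw [hsplit k, add_smul]
      _ = _ := by
          congr 1
          · -- middle sum
            refine Finset.sum_congr rfl fun k hk => ?_
            have hpt : (((2 * k + 1 : ℕ) : ℝ) / (2 : ℝ) ^ (n + 1) : ℝ)
                = ((k / 2 ^ n : ℝ) + (((2 : ℝ) ^ (n + 1))⁻¹ : ℝ)) := by
              push_cast
              field_simp
              ring
            rw [← AddCircle.coe_add, hpt]
          · -- shifted sum, with wrap-around at the boundary
            refine sum_range_rotate (2 ^ n) hpow _ _ (fun k hk => ?_) ?_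
            · have hco : 2 ^ n + k + 1 = 2 ^ n + (k + 1) := by omega
              have hpt : (((2 * k + 1 : ℕ) : ℝ) / (2 : ℝ) ^ (n + 1) : ℝ)
                  = (((k + 1 : ℕ) : ℝ) / 2 ^ n + (-(((2 : ℝ) ^ (n + 1))⁻¹)) : ℝ) := by
                push_cast
                field_simp
                ring
              rw [hco, ← AddCircle.coe_add, hpt]
            · -- boundary term
              have hco : 2 ^ n + (2 ^ n - 1) + 1 = 2 * 2 ^ n := by omega
              rw [hco, stern_two_mul]
              have hcast : ((2 * (2 ^ n - 1) + 1 : ℕ) : ℝ) = 2 * (2 : ℝ) ^ n - 1 := by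
                have : (2 * (2 ^ n - 1) + 1 : ℕ) = 2 * 2 ^ n - 1 := by omega
                rw [this, Nat.cast_sub (by omega)]
                push_cast
                ring
              have hpt : (((2 * (2 ^ n - 1) + 1 : ℕ) : ℝ) / (2 : ℝ) ^ (n + 1) : ℝ)
                  = ((((0 : ℕ) : ℝ) / 2 ^ n + (-(((2 : ℝ) ^ (n + 1))⁻¹)) : ℝ) + 1) := by
                rw [hcast]
                push_cast
                field_simp
                ring
              rw [← AddCircle.coe_add, hpt, AddCircle.coe_add_period]
              norm_num
  rw [heven, hodd]
  abel

/-- μ_0 = δ_0 and, for every n ≥ 1, μ_n = ⋆_{m=1}^{n} (1/3)(δ_0 + δ_{2^{-m}} + δ_{-2^{-m}}). -/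
theorem sternMeasure_eq_conv :
    sternMeasure 0 = Measure.dirac ((0 : ℝ) : UnitAddCircle) ∧
      ∀ n : ℕ, 1 ≤ n → sternMeasure n = sternConvIter n := by
  have h0 : sternMeasure 0 = Measure.dirac ((0 : ℝ) : UnitAddCircle) := by
    rw [sternMeasure]
    simp [stern]
  refine ⟨h0, ?_⟩
  have hall : ∀ n : ℕ, sternMeasure n = sternConvIter n := by
    intro n
    induction n with
    | zero => rw [h0]; rfl
    | succ m ih => rw [sternMeasure_succ, ih]; rfl
  exact fun n _ => hall n
end
end

section
/- For every integer k, the Fourier–Stieltjes coefficients of μ satisfy μ̂(2k) = μ̂(k). -/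
open MeasureTheory Filter Topology Real
open scoped ENNReal

noncomputable section

lemma stern_key : ∀ n : ℕ, ∀ m ≤ 2 ^ n,
    stern (2 ^ (n + 1) + m) + stern (3 * 2 ^ n + m) = 3 * stern (2 ^ n + m) := by
  intro n
  induction n with
  | zero =>
    intro m hm
    interval_cases m <;> norm_num <;> simp [stern]
  | succ n ih =>
    intro m hm
    rcases Nat.even_or_odd m with ⟨j, rfl⟩ | ⟨j, rfl⟩
    · have h1 : 2 ^ (n + 2) + (j + j) = 2 * (2 ^ (n + 1) + j) := by ring
      have h2 : 3 * 2 ^ (n + 1) + (j + j) = 2 * (3 * 2 ^ n + j) := by ring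
      have h3 : 2 ^ (n + 1) + (j + j) = 2 * (2 ^ n + j) := by ring
      rw [h1, h2, h3, stern_two_mul, stern_two_mul, stern_two_mul]
      exact ih j (by omega)
    · have h1 : 2 ^ (n + 2) + (2 * j + 1) = 2 * (2 ^ (n + 1) + j) + 1 := by ring
      have h2 : 3 * 2 ^ (n + 1) + (2 * j + 1) = 2 * (3 * 2 ^ n + j) + 1 := by ring
      have h3 : 2 ^ (n + 1) + (2 * j + 1) = 2 * (2 ^ n + j) + 1 := by ring
      rw [h1, h2, h3, stern_two_mul_add_one, stern_two_mul_add_one, stern_two_mul_add_one]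
      have e1 : 2 ^ (n + 1) + j + 1 = 2 ^ (n + 1) + (j + 1) := by ring
      have e2 : 3 * 2 ^ n + j + 1 = 3 * 2 ^ n + (j + 1) := by ring
      have e3 : 2 ^ n + j + 1 = 2 ^ n + (j + 1) := by ring
      have := ih j (by omega)
      have := ih (j + 1) (by omega)
      rw [e1, e2, e3]
      omega

/-- The Fourier–Stieltjes coefficient ν̂(k) = ∫_𝕋 e^{-2πikx} dν(x) of a measure ν on the 1-torus. -/
def fourierCoeffMeasure (ν : Measure UnitAddCircle) (k : ℤ) : ℂ :=
  ∫ x, fourier (-k) x ∂ν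

lemma integral_sternMeasure (n : ℕ) (f : UnitAddCircle → ℝ) (hf : Continuous f) :
    ∫ x, f x ∂(sternMeasure n) = ((3 : ℝ) ^ n)⁻¹ * ∑ m ∈ Finset.range (2 ^ n),
      (stern (2 ^ n + m) : ℝ) * f ((m / 2 ^ n : ℝ) : UnitAddCircle) := by
  have hint : ∀ m ∈ Finset.range (2 ^ n), Integrable f
      ((stern (2 ^ n + m) : ℝ≥0∞) • Measure.dirac ((m / 2 ^ n : ℝ) : UnitAddCircle)) :=
    fun m _ => by
      haveI := Measure.smul_finite
        (Measure.dirac ((m / 2 ^ n : ℝ) : UnitAddCircle))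
        (c := (stern (2 ^ n + m) : ℝ≥0∞)) (ENNReal.natCast_ne_top _)
      exact hf.integrable_of_hasCompactSupport (HasCompactSupport.of_compactSpace f)
  rw [sternMeasure, integral_smul_measure, integral_finset_sum_measure hint]
  simp only [integral_smul_measure, integral_dirac, ENNReal.toReal_inv, ENNReal.toReal_pow, ENNReal.toReal_ofNat, smul_eq_mul, ENNReal.toReal_natCast]

set_option maxHeartbeats 1000000 in
lemma step_integral (f : C(UnitAddCircle, ℝ)) (n : ℕ) :
    ∫ x, f (x + x) ∂(sternMeasure (n + 1)) = ∫ x, f x ∂(sternMeasure n) := by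
  rw [integral_sternMeasure (n + 1) (fun x => f (x + x))
    (f.continuous.comp (continuous_id.add continuous_id)),
    integral_sternMeasure n f f.continuous]
  have hpt : ∀ m ∈ Finset.range (2 ^ (n + 1)),
      (stern (2 ^ (n + 1) + m) : ℝ) *
        f (((m / 2 ^ (n + 1) : ℝ) : UnitAddCircle) + ((m / 2 ^ (n + 1) : ℝ) : UnitAddCircle))
      = (stern (2 ^ (n + 1) + m) : ℝ) * f ((m / 2 ^ n : ℝ) : UnitAddCircle) := by
    intro m _
    congr 1
    rw [← AddCircle.coe_add]
    congr 1
    field_simp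
    ring
  rw [Finset.sum_congr rfl hpt]
  have hsplit : (2 : ℕ) ^ (n + 1) = 2 ^ n + 2 ^ n := by ring
  rw [hsplit, Finset.sum_range_add]
  have hpt2 : ∀ i ∈ Finset.range (2 ^ n),
      (stern (2 ^ n + 2 ^ n + (2 ^ n + i)) : ℝ) *
        f (((2 ^ n + i : ℕ) / 2 ^ n : ℝ) : UnitAddCircle)
      = (stern (3 * 2 ^ n + i) : ℝ) * f ((i / 2 ^ n : ℝ) : UnitAddCircle) := by
    intro i _
    have h1 : 2 ^ n + 2 ^ n + (2 ^ n + i) = 3 * 2 ^ n + i := by ring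
    rw [h1]
    congr 1
    have h2 : ((2 ^ n + i : ℕ) : ℝ) / 2 ^ n = (i : ℝ) / 2 ^ n + 1 := by
      push_cast
      rw [add_div, div_self (by positivity : ((2 : ℝ) ^ n) ≠ 0)]
      ring
    rw [h2, AddCircle.coe_add, AddCircle.coe_period, add_zero]
  rw [Finset.sum_congr rfl hpt2, ← Finset.sum_add_distrib]
  have hcomb : ∀ m ∈ Finset.range (2 ^ n),
      ((stern (2 ^ n + 2 ^ n + m) : ℝ) * f ((m / 2 ^ n : ℝ) : UnitAddCircle)
        + (stern (3 * 2 ^ n + m) : ℝ) * f ((m / 2 ^ n : ℝ) : UnitAddCircle))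
      = 3 * ((stern (2 ^ n + m) : ℝ) * f ((m / 2 ^ n : ℝ) : UnitAddCircle)) := by
    intro m hm
    have key := stern_key n m (le_of_lt (Finset.mem_range.mp hm))
    have h1 : 2 ^ n + 2 ^ n + m = 2 ^ (n + 1) + m := by ring
    rw [h1, ← add_mul, ← Nat.cast_add, key]
    push_cast
    ring
  rw [Finset.sum_congr rfl hcomb, ← Finset.mul_sum]
  have h3 : ((3 : ℝ) ^ (n + 1))⁻¹ * 3 = ((3 : ℝ) ^ n)⁻¹ := by
    field_simp
    ring
  rw [← mul_assoc, h3]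

/-- For the weak limit μ of (μ_n), the Fourier–Stieltjes coefficients satisfy
μ̂(2k) = μ̂(k) for every integer k. -/
theorem fourierCoeff_limit_two_mul (μ : Measure UnitAddCircle)
    (hμ : IsProbabilityMeasure μ)
    (hlim : ∀ f : C(UnitAddCircle, ℝ),
      Tendsto (fun n => ∫ x, f x ∂(sternMeasure n)) atTop (𝓝 (∫ x, f x ∂μ)))
    (k : ℤ) :
    fourierCoeffMeasure μ (2 * k) = fourierCoeffMeasure μ k := by
  have key : ∀ f : C(UnitAddCircle, ℝ), ∫ x, f (x + x) ∂μ = ∫ x, f x ∂μ := by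
    intro f
    set D : C(UnitAddCircle, UnitAddCircle) :=
      ⟨fun x => x + x, continuous_id.add continuous_id⟩ with hD
    have h1 := hlim (f.comp D)
    have h2 := hlim f
    have h3 : Tendsto (fun n => ∫ x, (f.comp D) x ∂(sternMeasure (n + 1))) atTop
        (𝓝 (∫ x, (f.comp D) x ∂μ)) := h1.comp (tendsto_add_atTop_nat 1)
    have h4 : (fun n => ∫ x, (f.comp D) x ∂(sternMeasure (n + 1)))
        = fun n => ∫ x, f x ∂(sternMeasure n) := by
      funext n
      exact step_integral f n
    rw [h4] at h3
    exact tendsto_nhds_unique h3 h2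
  have keyC : ∀ g : C(UnitAddCircle, ℂ), ∫ x, g (x + x) ∂μ = ∫ x, g x ∂μ := by
    intro g
    have hint1 : Integrable (fun x => g x) μ :=
      g.continuous.integrable_of_hasCompactSupport (HasCompactSupport.of_compactSpace _)
    have hint2 : Integrable (fun x : UnitAddCircle => g (x + x)) μ :=
      (g.continuous.comp (continuous_id.add continuous_id)).integrable_of_hasCompactSupport
        (HasCompactSupport.of_compactSpace _)
    have hre := key ⟨fun x => (g x).re, Complex.continuous_re.comp g.continuous⟩
    have him := key ⟨fun x => (g x).im, Complex.continuous_im.comp g.continuous⟩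
    apply Complex.ext
    · have e2 := Complex.reCLM.integral_comp_comm hint2
      have e1 := Complex.reCLM.integral_comp_comm hint1
      simp only [Complex.reCLM_apply] at e1 e2
      rw [← e2, ← e1]
      exact hre
    · have e2 := Complex.imCLM.integral_comp_comm hint2
      have e1 := Complex.imCLM.integral_comp_comm hint1
      simp only [Complex.imCLM_apply] at e1 e2
      rw [← e2, ← e1]
      exact him
  have hfour : ∀ x : UnitAddCircle, (fourier (-(2 * k)) x : ℂ) = fourier (-k) (x + x) := by
    intro x
    rw [fourier_apply, fourier_apply]
    congr 1
    rw [smul_add, ← add_zsmul]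
    congr 1
    ring
  unfold fourierCoeffMeasure
  calc ∫ x, (fourier (-(2 * k)) x : ℂ) ∂μ
      = ∫ x, (fourier (-k) (x + x) : ℂ) ∂μ := by simp_rw [hfour]
    _ = ∫ x, (fourier (-k) x : ℂ) ∂μ := keyC (fourier (-k))
end
end
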